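/- arXiv:2206.03723 — 3 statements merged into one kernel-verified Lean document; each statement's English description precedes it below -/
import Mathlib

section
/- For all integers n and ω with 1 ≤ ω ≤ n, the largest adjacency eigenvalue of the complete split graph CS_{n,ω} equals (ω − 1 + √(−3ω² + (4n − 2)ω + 1)) / 2. -/
/-- The adjacency matrix of a simple graph on `Fin n`, over `ℝ`. -/
noncomputable def adjMat {n : ℕ} (G : SimpleGraph (Fin n)) : Matrix (Fin n) (Fin n) ℝ :=
  letI : DecidableRel G.Adj := Classical.decRel _
  G.adjMatrix ℝ

/-- The set of eigenvalues of a real square matrix. -/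
def eigSet {n : ℕ} (M : Matrix (Fin n) (Fin n) ℝ) : Set ℝ :=
  {mu : ℝ | ∃ x : Fin n → ℝ, x ≠ 0 ∧ M.mulVec x = mu • x}

/-- The largest eigenvalue of a real square matrix. -/
noncomputable def lamMax {n : ℕ} (M : Matrix (Fin n) (Fin n) ℝ) : ℝ := sSup (eigSet M)

/-- The least eigenvalue of a real square matrix. -/
noncomputable def lamMin {n : ℕ} (M : Matrix (Fin n) (Fin n) ℝ) : ℝ := sInf (eigSet M)

/-- `λ₁(G)`: the largest adjacency eigenvalue of `G`. -/
noncomputable def lam1 {n : ℕ} (G : SimpleGraph (Fin n)) : ℝ := lamMax (adjMat G)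

/-- The degree of a vertex. -/
noncomputable def deg {n : ℕ} (G : SimpleGraph (Fin n)) (v : Fin n) : ℕ :=
  Nat.card {u : Fin n // G.Adj v u}

/-- The signless Laplacian `Q(G) = D(G) + A(G)`. -/
noncomputable def signlessLap {n : ℕ} (G : SimpleGraph (Fin n)) : Matrix (Fin n) (Fin n) ℝ :=
  Matrix.diagonal (fun v => (deg G v : ℝ)) + adjMat G

/-- `q₁(G)`: the largest signless Laplacian eigenvalue. -/
noncomputable def q1 {n : ℕ} (G : SimpleGraph (Fin n)) : ℝ := lamMax (signlessLap G)

/-- `qₙ(G)`: the least signless Laplacian eigenvalue. -/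
noncomputable def qmin {n : ℕ} (G : SimpleGraph (Fin n)) : ℝ := lamMin (signlessLap G)

/-- The `Q`-spread `s_Q(G) = q₁(G) - qₙ(G)`. -/
noncomputable def sQ {n : ℕ} (G : SimpleGraph (Fin n)) : ℝ := q1 G - qmin G

/-- The complete split graph `CS_{n,ω}`: a clique on the first `ω` vertices, completely
joined to an independent set on the remaining `n - ω` vertices. -/
def CS (n w : ℕ) : SimpleGraph (Fin n) where
  Adj u v := u ≠ v ∧ ((u : ℕ) < w ∨ (v : ℕ) < w)
  symm := ⟨by intro u v h; exact ⟨h.1.symm, h.2.symm⟩⟩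
  loopless := ⟨by intro u h; exact h.1 rfl⟩

/-- `K_{n-1}^+`: the complete graph on the first `n-1` vertices together with a pendant
vertex (the last vertex) joined to exactly one clique vertex (vertex `0`). -/
def KPlus (n : ℕ) : SimpleGraph (Fin n) where
  Adj u v := u ≠ v ∧ (((u : ℕ) < n - 1 ∧ (v : ℕ) < n - 1) ∨ (u : ℕ) = 0 ∨ (v : ℕ) = 0)
  symm := ⟨by intro u v h; refine ⟨h.1.symm, ?_⟩; tauto⟩
  loopless := ⟨by intro u h; exact h.1 rfl⟩

/-! The claimed value `μ` is the larger root of `μ² = (ω - 1) μ + ω (n - ω)`, so the vector equal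
to `μ` on the clique and to `ω` on the independent set is a positive eigenvector of `A(CS_{n,ω})`
for `μ` (the all-ones vector when `n = ω`). For a nonnegative symmetric matrix an eigenvalue with a
positive eigenvector is the largest one: pairing the positive eigenvector with `|x|`, where
`A x = λ x`, and using `λ |x| ≤ A |x|` entrywise gives `λ ≤ μ`. -/

open Matrix Finset

section Perron

variable {n : ℕ} {M : Matrix (Fin n) (Fin n) ℝ} {z : Fin n → ℝ} {μ : ℝ}

theorem le_of_mem_eigSet_of_pos_left_eigenvector (hM : ∀ i j, 0 ≤ M i j) (hz : ∀ i, 0 < z i)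
    (hzμ : z ᵥ* M = μ • z) {lam : ℝ} (hlam : lam ∈ eigSet M) : lam ≤ μ := by
  obtain ⟨x, hx0, hx⟩ := hlam
  set y : Fin n → ℝ := fun i => |x i|
  have hy : lam • y ≤ M *ᵥ y := fun i => calc
    lam * |x i| ≤ |lam * x i| := by rw [abs_mul]; gcongr; exact le_abs_self lam
    _ = |∑ j, M i j * x j| := by rw [← smul_eq_mul, ← Pi.smul_apply, ← hx]; rfl
    _ ≤ ∑ j, |M i j * x j| := abs_sum_le_sum_abs _ _
    _ = (M *ᵥ y) i := by simp only [abs_mul, abs_of_nonneg (hM i _)]; rfl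
  have hpos : 0 < z ⬝ᵥ y := by
    obtain ⟨i, hi⟩ := Function.ne_iff.mp hx0
    exact sum_pos' (fun j _ => mul_nonneg (hz j).le (abs_nonneg _))
      ⟨i, mem_univ i, mul_pos (hz i) (abs_pos.mpr hi)⟩
  refine le_of_mul_le_mul_right ?_ hpos
  calc lam * (z ⬝ᵥ y) = z ⬝ᵥ (lam • y) := by rw [dotProduct_smul, smul_eq_mul]
    _ ≤ z ⬝ᵥ (M *ᵥ y) := dotProduct_le_dotProduct_of_nonneg_left hy fun i => (hz i).le
    _ = μ * (z ⬝ᵥ y) := by rw [dotProduct_mulVec, hzμ, smul_dotProduct, smul_eq_mul]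

theorem lamMax_eq_of_pos_eigenvector [NeZero n] (hMs : M.IsSymm) (hM : ∀ i j, 0 ≤ M i j)
    (hz : ∀ i, 0 < z i) (hzμ : M *ᵥ z = μ • z) : lamMax M = μ := by
  have hmem : μ ∈ eigSet M := ⟨z, fun h => (hz 0).ne' (congrFun h _), hzμ⟩
  refine IsGreatest.csSup_eq ⟨hmem, fun lam hlam => ?_⟩
  refine le_of_mem_eigSet_of_pos_left_eigenvector hM hz ?_ hlam
  rw [← mulVec_transpose, hMs.eq, hzμ]

end Perron

theorem lam1_eq_of_pos_eigenvector {n : ℕ} [NeZero n] {G : SimpleGraph (Fin n)} {z : Fin n → ℝ}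
    {μ : ℝ} (hz : ∀ i, 0 < z i) (hzμ : adjMat G *ᵥ z = μ • z) : lam1 G = μ := by
  classical
  refine lamMax_eq_of_pos_eigenvector G.isSymm_adjMatrix (fun i j => ?_) hz hzμ
  simp only [adjMat, SimpleGraph.adjMatrix_apply]
  split_ifs <;> norm_num

section QuadraticRoot

variable {p q : ℝ}

theorem sq_half_add_sqrt (hq : 0 ≤ q) :
    ((p + √(p ^ 2 + 4 * q)) / 2) ^ 2 = p * ((p + √(p ^ 2 + 4 * q)) / 2) + q := by
  have h := Real.sq_sqrt (by positivity : 0 ≤ p ^ 2 + 4 * q)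
  linear_combination h / 4

theorem half_add_sqrt_pos (hq : 0 < q) : 0 < (p + √(p ^ 2 + 4 * q)) / 2 := by
  have h : |p| < √(p ^ 2 + 4 * q) := by
    rw [← Real.sqrt_sq_eq_abs]
    exact Real.sqrt_lt_sqrt (sq_nonneg p) (by linarith)
  linarith [neg_abs_le p]

end QuadraticRoot

section CompleteSplit

variable {n w : ℕ}

@[simp]
theorem CS_adj {u v : Fin n} : (CS n w).Adj u v ↔ u ≠ v ∧ ((u : ℕ) < w ∨ (v : ℕ) < w) := Iff.rfl

theorem adjMat_CS_mulVec_ite (hwn : w ≤ n) (a b : ℝ) (v : Fin n) :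
    (adjMat (CS n w) *ᵥ fun u => if (u : ℕ) < w then a else b) v =
      if (v : ℕ) < w then (w - 1) * a + (n - w) * b else w * a := by
  classical
  unfold adjMat
  rw [SimpleGraph.adjMatrix_mulVec_apply]
  have hsum : ∑ u : Fin n, (if (u : ℕ) < w then a else b) = w * a + (n - w) * b := by
    rw [sum_ite, sum_const, sum_const, filter_not, card_sdiff_of_subset (subset_univ _),
      Fin.card_filter_val_lt, card_univ, Fintype.card_fin, min_eq_right hwn]
    simp [Nat.cast_sub hwn]
  split_ifs with hv
  · have hN : (CS n w).neighborFinset v = univ.erase v := by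
      ext u; simp [hv, eq_comm]
    rw [hN, sum_erase_eq_sub (mem_univ v), hsum, if_pos hv]
    ring
  · have hN : (CS n w).neighborFinset v = ({u | (u : ℕ) < w} : Finset (Fin n)) := by
      ext u
      simp only [SimpleGraph.mem_neighborFinset, CS_adj, hv, false_or, mem_filter, mem_univ,
        true_and]
      exact ⟨And.right, fun hu => ⟨by rintro rfl; exact hv hu, hu⟩⟩
    rw [hN, sum_ite_of_true (fun u hu => (mem_filter.mp hu).2), sum_const,
      Fin.card_filter_val_lt, min_eq_right hwn, nsmul_eq_mul]

theorem exists_pos_eigenvector_adjMat_CS (hw1 : 1 ≤ w) (hwn : w ≤ n) :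
    ∃ z : Fin n → ℝ, (∀ i, 0 < z i) ∧ adjMat (CS n w) *ᵥ z =
      (((w : ℝ) - 1 + √(-3 * (w : ℝ) ^ 2 + (4 * (n : ℝ) - 2) * w + 1)) / 2) • z := by
  have hdisc : -3 * (w : ℝ) ^ 2 + (4 * (n : ℝ) - 2) * w + 1 =
      (w - 1) ^ 2 + 4 * (w * (n - w)) := by
    ring
  have hw : (1 : ℝ) ≤ w := by exact_mod_cast hw1
  rw [hdisc]
  rcases hwn.eq_or_lt with rfl | hlt
  · refine ⟨1, fun _ => one_pos, funext fun v => ?_⟩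
    have hv := adjMat_CS_mulVec_ite le_rfl (1 : ℝ) 1 v
    simp only [ite_self, if_pos v.isLt] at hv
    rw [Pi.one_def, hv, Pi.smul_apply, sub_self, mul_zero, mul_zero, add_zero,
      Real.sqrt_sq (by linarith)]
    simp
  · have hq : (0 : ℝ) < w * (n - w) := mul_pos (by linarith) (sub_pos.mpr (by exact_mod_cast hlt))
    have hμ := sq_half_add_sqrt (p := (w : ℝ) - 1) hq.le
    have hμ0 := half_add_sqrt_pos (p := (w : ℝ) - 1) hq
    set μ := ((w : ℝ) - 1 + √((w - 1) ^ 2 + 4 * (w * (n - w)))) / 2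
    clear_value μ
    refine ⟨fun u => if (u : ℕ) < w then μ else w,
      fun i => by dsimp only; split_ifs <;> positivity, funext fun v => ?_⟩
    rw [adjMat_CS_mulVec_ite hlt.le, Pi.smul_apply, smul_eq_mul]
    split_ifs
    · linear_combination -hμ
    · ring

end CompleteSplit

theorem stmt5 (n w : ℕ) (hw1 : 1 ≤ w) (hwn : w ≤ n) :
    lam1 (CS n w) =
      ((w : ℝ) - 1 + Real.sqrt (-3 * (w : ℝ) ^ 2 + (4 * (n : ℝ) - 2) * w + 1)) / 2 := by
  have : NeZero n := ⟨by omega⟩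
  obtain ⟨z, hz, hzμ⟩ := exists_pos_eigenvector_adjMat_CS hw1 hwn
  exact lam1_eq_of_pos_eigenvector hz hzμ
end

section
/- For all integers n and ω with 1 ≤ ω ≤ n − 1, if G = CS_{n,ω} then λ1(G) + λ1(Ḡ) = (√(−3ω² + (4n − 2)ω + 1) − ω)/2 + n − 3/2. -/
/-!
Vectors constant on the clique and on the independent set are mapped to such vectors by both
adjacency matrices. On `CS n ω` the vector equal to `λ` on the clique and `ω` off it is a positive
eigenvector for the positive root `λ` of `λ² = (ω - 1) λ + ω (n - ω)`; the complement is `K_{n-ω}`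
plus `ω` isolated vertices, with eigenvector the indicator of the independent set for `n - ω - 1`.
These eigenvalues are the largest because a nonnegative matrix `M` with a positive vector `v`,
`M v ≤ r v`, has no real eigenvalue of absolute value above `r`: compare an eigenvector `x` with the
least multiple `t v` dominating `|x|` at a coordinate where they touch. For the complement take `v`
the all-ones vector, for `CS n ω` the Perron vector itself.
-/

open Finset Matrix

theorem abs_le_of_mem_eigSet_of_mulVec_le {n : ℕ} {M : Matrix (Fin n) (Fin n) ℝ}
    {v : Fin n → ℝ} {r μ : ℝ} (hM : ∀ i j, 0 ≤ M i j) (hv : ∀ i, 0 < v i)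
    (hMv : ∀ i, (M *ᵥ v) i ≤ r * v i) (hμ : μ ∈ eigSet M) : |μ| ≤ r := by
  obtain ⟨x, hx0, hx⟩ := hμ
  obtain ⟨k, hk⟩ : ∃ k, x k ≠ 0 := by
    by_contra! h
    exact hx0 (funext h)
  obtain ⟨i, -, hi⟩ := exists_max_image univ (fun j => |x j| / v j) ⟨k, mem_univ k⟩
  set t := |x i| / v i
  have hxt : ∀ j, |x j| ≤ t * v j := fun j => (div_le_iff₀ (hv j)).1 (hi j (mem_univ j))
  have ht : 0 < t := (div_pos (abs_pos.2 hk) (hv k)).trans_le (hi k (mem_univ k))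
  have hxi : |x i| = t * v i := by simp only [t]; field_simp [(hv i).ne']
  have key : |μ| * (t * v i) ≤ r * (t * v i) :=
    calc |μ| * (t * v i) = |∑ j, M i j * x j| := by
          rw [← hxi, ← abs_mul, ← smul_eq_mul, ← Pi.smul_apply, ← hx]; rfl
      _ ≤ ∑ j, M i j * |x j| :=
          (abs_sum_le_sum_abs _ _).trans_eq (by simp only [abs_mul, abs_of_nonneg (hM i _)])
      _ ≤ ∑ j, M i j * (t * v j) :=
          sum_le_sum fun j _ => mul_le_mul_of_nonneg_left (hxt j) (hM i j)
      _ = t * (M *ᵥ v) i := by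
          simp only [mulVec, dotProduct, mul_sum]
          exact sum_congr rfl fun j _ => by ring
      _ ≤ t * (r * v i) := mul_le_mul_of_nonneg_left (hMv i) ht.le
      _ = r * (t * v i) := by ring
  exact le_of_mul_le_mul_right key (mul_pos ht (hv i))

theorem adjMat_nonneg {n : ℕ} (G : SimpleGraph (Fin n)) (i j : Fin n) : 0 ≤ adjMat G i j := by
  classical
  simp only [adjMat, SimpleGraph.adjMatrix_apply]
  split_ifs <;> norm_num

theorem adjMat_mulVec_apply {n : ℕ} (G : SimpleGraph (Fin n)) [DecidableRel G.Adj]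
    (x : Fin n → ℝ) (u : Fin n) : (adjMat G *ᵥ x) u = ∑ v, if G.Adj u v then x v else 0 := by
  simp only [adjMat, mulVec, dotProduct, SimpleGraph.adjMatrix_apply, ite_mul, one_mul, zero_mul]

def blockVec (n w : ℕ) (a b : ℝ) : Fin n → ℝ := fun u => if (u : ℕ) < w then a else b

section blockVec

variable {n w : ℕ} {a b : ℝ}

theorem smul_blockVec (c : ℝ) : c • blockVec n w a b = blockVec n w (c * a) (c * b) := by
  ext u
  simp only [blockVec, Pi.smul_apply, smul_eq_mul, mul_ite]

theorem blockVec_ne_zero (hwn : w < n) (hb : b ≠ 0) : blockVec n w a b ≠ 0 := fun h => by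
  simpa [blockVec, show ¬n - 1 < w by omega, hb] using congrFun h ⟨n - 1, by omega⟩

theorem sum_blockVec (hwn : w ≤ n) : ∑ u, blockVec n w a b u = w * a + (n - w) * b := by
  simp only [blockVec]
  rw [Fin.sum_univ_eq_sum_range (fun j => if j < w then a else b), range_eq_Ico,
    ← sum_Ico_consecutive _ (Nat.zero_le w) hwn,
    sum_congr rfl fun j hj => if_pos (mem_Ico.1 hj).2,
    sum_congr rfl fun j hj => if_neg (mem_Ico.1 hj).1.not_gt]
  simp [Nat.cast_sub hwn]

theorem adjMat_CS_mulVec_blockVec (hwn : w ≤ n) :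
    adjMat (CS n w) *ᵥ blockVec n w a b = blockVec n w ((w - 1) * a + (n - w) * b) (w * a) := by
  classical
  ext u
  rw [adjMat_mulVec_apply]
  by_cases hu : (u : ℕ) < w
  · have hrow : ∀ v, (if (CS n w).Adj u v then blockVec n w a b v else 0)
        = blockVec n w a b v - if v = u then a else 0 := by
      intro v
      by_cases hvu : v = u
      · subst hvu; simp [CS, blockVec, hu]
      · simp [CS, hvu, Ne.symm hvu, hu]
    simp only [hrow, sum_sub_distrib, sum_ite_eq', mem_univ, if_true, sum_blockVec hwn]
    simp only [blockVec, if_pos hu]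
    ring
  · have hrow : ∀ v, (if (CS n w).Adj u v then blockVec n w a b v else 0)
        = blockVec n w a 0 v := by
      intro v
      by_cases hv : (v : ℕ) < w
      · simp [CS, blockVec, hv, show u ≠ v by rintro rfl; exact hu hv]
      · simp [CS, blockVec, hv, hu]
    simp only [hrow, sum_blockVec hwn]
    simp only [blockVec, if_neg hu]
    ring

theorem adjMat_compl_CS_mulVec_blockVec (hwn : w ≤ n) :
    adjMat (CS n w)ᶜ *ᵥ blockVec n w a b = blockVec n w 0 ((n - w - 1) * b) := by
  classical
  ext u
  rw [adjMat_mulVec_apply]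
  by_cases hu : (u : ℕ) < w
  · simp [CS, blockVec, hu]
  · have hrow : ∀ v, (if (CS n w)ᶜ.Adj u v then blockVec n w a b v else 0)
        = blockVec n w 0 b v - if v = u then b else 0 := by
      intro v
      by_cases hvu : v = u
      · subst hvu; simp [blockVec, hu]
      · by_cases hv : (v : ℕ) < w
        · simp [CS, blockVec, hv, hvu]
        · simp [CS, blockVec, hv, hvu, Ne.symm hvu, hu]
    simp only [hrow, sum_sub_distrib, sum_ite_eq', mem_univ, if_true, sum_blockVec hwn]
    simp only [blockVec, if_neg hu]
    ring

end blockVec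

theorem isGreatest_eigSet_adjMat_CS {n w : ℕ} (hw : 1 ≤ w) (hwn : w < n) :
    IsGreatest (eigSet (adjMat (CS n w)))
      ((w - 1 + √(-3 * (w : ℝ) ^ 2 + (4 * n - 2) * w + 1)) / 2) := by
  have hwR : (1 : ℝ) ≤ w := by exact_mod_cast hw
  have hwnR : (w : ℝ) + 1 ≤ n := by exact_mod_cast hwn
  set L := (w - 1 + √(-3 * (w : ℝ) ^ 2 + (4 * n - 2) * w + 1)) / 2
  have hsq : √(-3 * (w : ℝ) ^ 2 + (4 * n - 2) * w + 1) ^ 2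
      = (w - 1) ^ 2 + 4 * w * (n - w) := by
    rw [Real.sq_sqrt (by nlinarith)]
    ring
  have hquad : L * L = (w - 1) * L + (n - w) * w := by
    simp only [L]
    linear_combination hsq / 4
  have hL : 0 < L := by
    simp only [L]
    have := Real.sqrt_nonneg (-3 * (w : ℝ) ^ 2 + (4 * n - 2) * w + 1)
    nlinarith
  have hv : adjMat (CS n w) *ᵥ blockVec n w L w = L • blockVec n w L w := by
    rw [adjMat_CS_mulVec_blockVec hwn.le, smul_blockVec, ← hquad, mul_comm (w : ℝ) L]
  refine ⟨⟨_, blockVec_ne_zero hwn (by positivity), hv⟩, fun μ hμ => ?_⟩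
  refine (le_abs_self μ).trans (abs_le_of_mem_eigSet_of_mulVec_le (adjMat_nonneg _)
    (v := blockVec n w L w) (fun u => ?_) (fun u => by rw [hv]; rfl) hμ)
  unfold blockVec
  split_ifs <;> positivity

theorem isGreatest_eigSet_adjMat_compl_CS {n w : ℕ} (hwn : w < n) :
    IsGreatest (eigSet (adjMat (CS n w)ᶜ)) (n - w - 1) := by
  have hwnR : (w : ℝ) + 1 ≤ n := by exact_mod_cast hwn
  refine ⟨⟨blockVec n w 0 1, blockVec_ne_zero hwn one_ne_zero, ?_⟩, fun μ hμ => ?_⟩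
  · rw [adjMat_compl_CS_mulVec_blockVec hwn.le, smul_blockVec, mul_zero, mul_one]
  refine (le_abs_self μ).trans (abs_le_of_mem_eigSet_of_mulVec_le (adjMat_nonneg _)
    (v := blockVec n w 1 1) (fun u => ?_) (fun u => ?_) hμ)
  · simp [blockVec]
  · rw [adjMat_compl_CS_mulVec_blockVec hwn.le]
    simp only [blockVec]
    split_ifs <;> linarith

theorem stmt6 (n w : ℕ) (hw1 : 1 ≤ w) (hwn : w ≤ n - 1) :
    lam1 (CS n w) + lam1 (CS n w)ᶜ =
      (Real.sqrt (-3 * (w : ℝ) ^ 2 + (4 * (n : ℝ) - 2) * w + 1) - w) / 2 + n - 3 / 2 := by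
  have hwn' : w < n := by omega
  rw [lam1, lam1, lamMax, lamMax, (isGreatest_eigSet_adjMat_CS hw1 hwn').csSup_eq,
    (isGreatest_eigSet_adjMat_compl_CS hwn').csSup_eq]
  ring
end

section
/- For every n ≥ 4, the Q-spread of K_{n−1}^+ satisfies s_Q(K_{n−1}^+) > 2n − 5. -/
/-!
`Q(K_{m+1}^+)` maps vectors constant on the cells `{hub}`, `{other clique vertices}`,
`{pendant}` to vectors of the same shape, so every root of the characteristic polynomial of the
`3 × 3` quotient matrix is a `Q`-eigenvalue. Sign changes of that cubic at `0, 1, 2m, 2m + 2`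
give roots `ν < 1` and `μ > 2m`, whence `s_Q ≥ μ - ν > 2m - 1 = 2n - 5` for `n = m + 2`.
-/

open Matrix Finset

theorem eigSet_finite {n : ℕ} (M : Matrix (Fin n) (Fin n) ℝ) : (eigSet M).Finite :=
  (Module.End.finite_hasEigenvalue (toLin' M)).subset fun _ ⟨_, hx0, hx⟩ =>
    Module.End.hasEigenvalue_of_hasEigenvector ⟨Module.End.mem_eigenspace_iff.mpr hx, hx0⟩

theorem le_lamMax {n : ℕ} {M : Matrix (Fin n) (Fin n) ℝ} {μ : ℝ} (h : μ ∈ eigSet M) :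
    μ ≤ lamMax M :=
  le_csSup (eigSet_finite M).bddAbove h

theorem lamMin_le {n : ℕ} {M : Matrix (Fin n) (Fin n) ℝ} {μ : ℝ} (h : μ ∈ eigSet M) :
    lamMin M ≤ μ :=
  csInf_le (eigSet_finite M).bddBelow h

open Classical in
theorem signlessLap_mulVec_apply {n : ℕ} (G : SimpleGraph (Fin n)) (x : Fin n → ℝ)
    (v : Fin n) :
    (signlessLap G *ᵥ x) v = ∑ u, if G.Adj v u then x v + x u else 0 := by
  rw [signlessLap, add_mulVec, Pi.add_apply, mulVec_diagonal]
  simp only [adjMat, mulVec, dotProduct, SimpleGraph.adjMatrix_apply, ite_mul, one_mul, zero_mul,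
    ite_add_zero, sum_add_distrib, sum_ite, sum_const_zero, add_zero, sum_const, nsmul_eq_mul,
    deg, Nat.card_eq_fintype_card, Fintype.card_subtype]

theorem Fin.sum_univ_add_two {M : Type*} [AddCommMonoid M] {m : ℕ} (f : Fin (m + 2) → M) :
    ∑ u, f u = f 0 + ∑ i : Fin m, f i.castSucc.succ + f (Fin.last (m + 1)) := by
  rw [Fin.sum_univ_castSucc, Fin.sum_univ_succ]
  rfl

def kPlusVec (m : ℕ) (a b c : ℝ) : Fin (m + 2) → ℝ :=
  fun v => if v = 0 then a else if v = Fin.last (m + 1) then c else b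

section KPlusVec
variable {m : ℕ} (a b c : ℝ)

@[simp] theorem kPlusVec_zero : kPlusVec m a b c 0 = a := if_pos rfl

@[simp] theorem kPlusVec_last : kPlusVec m a b c (Fin.last (m + 1)) = c := by
  simp [kPlusVec]

@[simp] theorem kPlusVec_castSucc_succ (i : Fin m) : kPlusVec m a b c i.castSucc.succ = b := by
  simp [kPlusVec]

theorem smul_kPlusVec (t : ℝ) : t • kPlusVec m a b c = kPlusVec m (t * a) (t * b) (t * c) := by
  funext v
  simp only [kPlusVec, Pi.smul_apply, smul_eq_mul, mul_ite]

end KPlusVec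

section KPlusAdj
variable {m : ℕ} (i j : Fin m) (u : Fin (m + 2))

@[simp] theorem kPlus_adj_zero_iff : (KPlus (m + 2)).Adj 0 u ↔ u ≠ 0 := by
  simp [KPlus, eq_comm]

@[simp] theorem kPlus_adj_last_iff : (KPlus (m + 2)).Adj (Fin.last (m + 1)) u ↔ u = 0 := by
  simp only [KPlus, ne_eq, Fin.ext_iff, Fin.val_last, Fin.val_zero]
  omega

@[simp] theorem kPlus_adj_castSucc_succ_zero : (KPlus (m + 2)).Adj i.castSucc.succ 0 :=
  ((kPlus_adj_zero_iff _).mpr (Fin.succ_ne_zero _)).symm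

@[simp] theorem kPlus_not_adj_castSucc_succ_last :
    ¬(KPlus (m + 2)).Adj i.castSucc.succ (Fin.last (m + 1)) := fun h =>
  Fin.succ_ne_zero _ ((kPlus_adj_last_iff _).mp h.symm)

@[simp] theorem kPlus_adj_castSucc_succ_iff :
    (KPlus (m + 2)).Adj i.castSucc.succ j.castSucc.succ ↔ i ≠ j := by
  simp only [KPlus, ne_eq, Fin.ext_iff, Fin.val_castSucc, Fin.val_succ]
  omega

end KPlusAdj

theorem signlessLap_kPlus_mulVec (m : ℕ) (a b c : ℝ) :
    signlessLap (KPlus (m + 2)) *ᵥ kPlusVec m a b c =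
      kPlusVec m ((m + 1) * a + m * b + c) (a + (2 * m - 1) * b) (a + c) := by
  classical
  funext v
  rw [signlessLap_mulVec_apply, Fin.sum_univ_add_two]
  induction v using Fin.lastCases with
  | last => simp [add_comm]
  | cast v =>
    induction v using Fin.cases with
    | zero =>
      simp only [Fin.castSucc_zero, SimpleGraph.irrefl, ↓reduceIte, kPlus_adj_zero_iff, ne_eq,
        Fin.succ_ne_zero, not_false_eq_true, kPlusVec_zero, kPlusVec_castSucc_succ, sum_const,
        card_univ, Fintype.card_fin, smul_add, nsmul_eq_mul, zero_add, Fin.last_eq_zero_iff,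
        Nat.add_eq_zero_iff, one_ne_zero, and_false, kPlusVec_last]
      ring
    | succ i =>
      simp only [Fin.castSucc_succ, kPlus_adj_castSucc_succ_zero, ↓reduceIte,
        kPlusVec_castSucc_succ, kPlusVec_zero, kPlus_adj_castSucc_succ_iff, ne_eq, ite_not, sum_ite,
        sum_const_zero, filter_ne, sum_const, mem_univ, card_erase_of_mem, card_univ,
        Fintype.card_fin, smul_add, nsmul_eq_mul, Nat.cast_pred i.pos, zero_add,
        kPlus_not_adj_castSucc_succ_last, add_zero]
      ring

/-- The characteristic polynomial of the quotient matrix `!![m+1, m, 1; 1, 2m-1, 0; 1, 0, 1]`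
in `signlessLap_kPlus_mulVec`. -/
def kPlusCubic (m t : ℝ) : ℝ :=
  (t - m - 1) * (t - 2 * m + 1) * (t - 1) - m * (t - 1) - (t - 2 * m + 1)

theorem mem_eigSet_kPlus_of_kPlusCubic_eq_zero {m : ℕ} (hm : 1 ≤ m) {t : ℝ} (ht : t ≠ 1)
    (h : kPlusCubic m t = 0) : t ∈ eigSet (signlessLap (KPlus (m + 2))) := by
  have ht' : t - 1 ≠ 0 := sub_ne_zero.mpr ht
  set a := t - (2 * m - 1)
  refine ⟨kPlusVec m a 1 (a / (t - 1)), fun h0 => ?_, ?_⟩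
  · have := congrFun h0 (⟨0, hm⟩ : Fin m).castSucc.succ
    rw [kPlusVec_castSucc_succ] at this
    exact one_ne_zero this
  · rw [signlessLap_kPlus_mulVec, smul_kPlusVec]
    congr 1
    · rw [kPlusCubic] at h
      field_simp
      linear_combination -h
    · ring
    · field_simp
      ring

theorem continuous_kPlusCubic (m : ℝ) : Continuous (kPlusCubic m) := by
  unfold kPlusCubic
  fun_prop

theorem exists_kPlusCubic_eq_zero_of_lt_of_lt (m : ℝ) {s t : ℝ} (hst : s ≤ t)
    (hs : kPlusCubic m s < 0) (ht : 0 < kPlusCubic m t) :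
    ∃ r ∈ Set.Ioo s t, kPlusCubic m r = 0 :=
  intermediate_value_Ioo hst (continuous_kPlusCubic m).continuousOn ⟨hs, ht⟩

theorem stmt10 (n : ℕ) (hn : 4 ≤ n) : 2 * (n : ℝ) - 5 < sQ (KPlus n) := by
  obtain ⟨m, rfl⟩ : ∃ m, n = m + 2 := ⟨n - 2, by omega⟩
  have hm : (2 : ℝ) ≤ m := by exact_mod_cast (by omega : 2 ≤ m)
  obtain ⟨ν, ⟨-, hν⟩, hνroot⟩ := exists_kPlusCubic_eq_zero_of_lt_of_lt m zero_le_one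
    (by unfold kPlusCubic; nlinarith) (by unfold kPlusCubic; nlinarith)
  obtain ⟨μ, ⟨hμ, -⟩, hμroot⟩ := exists_kPlusCubic_eq_zero_of_lt_of_lt m
    (by linarith : 2 * (m : ℝ) ≤ 2 * m + 2) (by unfold kPlusCubic; nlinarith)
    (by unfold kPlusCubic; nlinarith)
  have hq1 := le_lamMax (mem_eigSet_kPlus_of_kPlusCubic_eq_zero (by omega) (by linarith) hμroot)
  have hqmin := lamMin_le (mem_eigSet_kPlus_of_kPlusCubic_eq_zero (by omega) hν.ne hνroot)
  rw [sQ, q1, qmin]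
  push_cast
  linarith
end
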